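/- arXiv:2007.05447 — 5 statements merged into one kernel-verified Lean document; each statement's English description precedes it below -/
import Mathlib

section
/- Let U ⊆ Δ(X×Y) be a convex and compact uncertainty set. Then min_{h ∈ T(X,Y)} max_{p ∈ U} ℓ(h,p) = max_{p ∈ U} min_{h ∈ T(X,Y)} ℓ(h,p) = H_ℓ(U). Moreover, if h^U attains the minimum of h ↦ max_{p ∈ U} ℓ(h,p) over T(X,Y) and p^U attains the maximum of H_ℓ over U, then ℓ(h^U, p^U) = H_ℓ(U); in particular h^U minimizes ℓ(·, p^U) over T(X,Y) and p^U maximizes ℓ(h^U, ·) over U. -/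
open scoped BigOperators Classical

noncomputable section

/-- The probability simplex on a finite type `Z`. -/
def probSimplex (Z : Type*) [Fintype Z] : Set (Z → ℝ) :=
  {p | (∀ z, 0 ≤ p z) ∧ ∑ z, p z = 1}

/-- Classification rules: maps assigning to each instance a distribution over labels. -/
def ruleSet (X Y : Type*) [Fintype Y] : Set (X → Y → ℝ) :=
  {h | ∀ x, h x ∈ probSimplex Y}

/-- Expected loss `ℓ(h,p) = ∑_{x,y} p(x,y) · L(h(·|x), y)`. -/
def expLoss {X Y : Type*} [Fintype X] [Fintype Y]
    (L : (Y → ℝ) → Y → EReal) (h : X → Y → ℝ) (p : X × Y → ℝ) : EReal :=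
  ∑ z : X × Y, (p z : EReal) * L (h z.1) z.2

/-- Generalized entropy `H_ℓ(p) = inf over rules h of ℓ(h,p)`. -/
def entropyFn {X Y : Type*} [Fintype X] [Fintype Y]
    (L : (Y → ℝ) → Y → EReal) (p : X × Y → ℝ) : EReal :=
  ⨅ h ∈ ruleSet X Y, expLoss L h p

/-- Maximum entropy over an uncertainty set `U`. -/
def maxEntropy {X Y : Type*} [Fintype X] [Fintype Y]
    (L : (Y → ℝ) → Y → EReal) (U : Set (X × Y → ℝ)) : EReal :=
  ⨆ p ∈ U, entropyFn L p

/-- Convexity of the score function in its first argument. -/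
def ConvexInFirst {Y : Type*} [Fintype Y] (L : (Y → ℝ) → Y → EReal) : Prop :=
  ∀ (y : Y) (q₁ q₂ : Y → ℝ), q₁ ∈ probSimplex Y → q₂ ∈ probSimplex Y →
    ∀ t : ℝ, 0 ≤ t → t ≤ 1 →
      L (t • q₁ + (1 - t) • q₂) y ≤ (t : EReal) * L q₁ y + ((1 - t : ℝ) : EReal) * L q₂ y

/-- Uncertainty set `U^{a,b}` given by interval expectations' constraints. -/
def uncertainty {X Y : Type*} [Fintype X] [Fintype Y] {m : ℕ}
    (Φ : X × Y → Fin m → ℝ) (a b : Fin m → ℝ) : Set (X × Y → ℝ) :=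
  {p | p ∈ probSimplex (X × Y) ∧
    ∀ i, a i ≤ (∑ z, p z * Φ z i) ∧ (∑ z, p z * Φ z i) ≤ b i}

/-- Uncertainty set `U^{a}` given by exact expectations' constraints. -/
def uncertaintyEq {X Y : Type*} [Fintype X] [Fintype Y] {m : ℕ}
    (Φ : X × Y → Fin m → ℝ) (a : Fin m → ℝ) : Set (X × Y → ℝ) :=
  {p | p ∈ probSimplex (X × Y) ∧ ∀ i, (∑ z, p z * Φ z i) = a i}

/-- The convex set `𝓛` associated with the score function `L`. -/
def LsetOf {Y : Type*} [Fintype Y] (L : (Y → ℝ) → Y → EReal) : Set (Y → ℝ) :=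
  {c | ∃ q ∈ probSimplex Y, ∀ y, (c y : EReal) + L q y ≤ 0}

/-- The function `φ_ℓ(μ, x)`. -/
def phiFn {X Y : Type*} [Fintype Y] {m : ℕ}
    (L : (Y → ℝ) → Y → EReal) (Φ : X × Y → Fin m → ℝ) (μ : Fin m → ℝ) (x : X) : ℝ :=
  sSup {ν : ℝ | (fun y => (∑ i, Φ (x, y) i * μ i) + ν) ∈ LsetOf L}

/-- The function `ψ_ℓ(μ, ν, x)`. -/
def psiFn {X Y : Type*} [Fintype Y] {m : ℕ}
    (L : (Y → ℝ) → Y → EReal) (Φ : X × Y → Fin m → ℝ) (μ : Fin m → ℝ)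
    (ν : Y → ℝ) (x : X) : ℝ :=
  sSup {ρ : ℝ | (fun y => (∑ i, Φ (x, y) i * μ i) + ν y + ρ) ∈ LsetOf L}

/-- Empirical marginal of a sequence of training instances. -/
def empMarginal {X : Type*} [Fintype X] {n : ℕ} (xs : Fin n → X) (x : X) : ℝ :=
  (Finset.univ.filter fun j => xs j = x).card / n

/-- Uncertainty set with instances' marginal fixed to the empirical marginal. -/
def uncertaintyX {X Y : Type*} [Fintype X] [Fintype Y] {m n : ℕ}
    (Φ : X × Y → Fin m → ℝ) (a b : Fin m → ℝ) (xs : Fin n → X) : Set (X × Y → ℝ) :=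
  {p ∈ uncertainty Φ a b | ∀ x, (∑ y, p (x, y)) = empMarginal xs x}

/-- Uncertainty set with labels' marginal fixed to `p₀`. -/
def uncertaintyY {X Y : Type*} [Fintype X] [Fintype Y] {m : ℕ}
    (Φ : X × Y → Fin m → ℝ) (a b : Fin m → ℝ) (p₀ : Y → ℝ) : Set (X × Y → ℝ) :=
  {p ∈ uncertainty Φ a b | ∀ y, (∑ x, p (x, y)) = p₀ y}

/-- Uncertainty set with both marginals fixed. -/
def uncertaintyXY {X Y : Type*} [Fintype X] [Fintype Y] {m n : ℕ}
    (Φ : X × Y → Fin m → ℝ) (a b : Fin m → ℝ) (xs : Fin n → X) (p₀ : Y → ℝ) :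
    Set (X × Y → ℝ) :=
  {p ∈ uncertainty Φ a b |
    (∀ x, (∑ y, p (x, y)) = empMarginal xs x) ∧ ∀ y, (∑ x, p (x, y)) = p₀ y}

/-!
`⨆ p, ⨅ h ≤ ⨅ h, ⨆ p` always holds. Conversely, fix `t` below `⨅ h, ⨆ p, ℓ(h, p)`. Every rule
loses more than `t` against some `p ∈ U`, so by compactness of the set of rules and lower
semicontinuity of `ℓ(·, p)` finitely many `p₁, …, pₙ ∈ U` suffice. For weights `w` in the open
simplex, `ℓ(h, ∑ wᵢ pᵢ) = ∑ wᵢ ℓ(h, pᵢ)` is upper semicontinuous and quasiconcave in `w`, and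
convex and lower semicontinuous in `h`, so Sion's minimax theorem (rules against weights) yields a
mixture in `U` whose entropy is at least `t`. The weights must stay off the boundary of the
simplex, where `0 · ⊤ = 0` breaks upper semicontinuity. Distributions against which some rule has
loss `⊥` are discarded beforehand: by convexity and lower semicontinuity, their loss is then `⊥`
against every rule. Finally, a minimax rule and a maximum-entropy distribution form a saddle point.
-/

open Filter Topology Set

namespace EReal

lemma coe_mul_sum_of_nonneg {ι : Type*} (s : Finset ι) (f : ι → EReal) {r : ℝ} (hr : 0 ≤ r) :
    (r : EReal) * ∑ i ∈ s, f i = ∑ i ∈ s, (r : EReal) * f i :=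
  map_sum ({ toFun := fun x => (r : EReal) * x, map_zero' := mul_zero _,
              map_add' := left_distrib_of_nonneg_of_ne_top (EReal.coe_nonneg.2 hr) (coe_ne_top r) }
    : EReal →+ EReal) f s

lemma coe_mul_add_coe_mul_self {a b : ℝ} (ha : 0 ≤ a) (hb : 0 ≤ b) (hab : a + b = 1)
    (x : EReal) : (a : EReal) * x + (b : EReal) * x = x := by
  rw [← right_distrib_of_nonneg (EReal.coe_nonneg.2 ha) (EReal.coe_nonneg.2 hb), ← coe_add, hab,
    coe_one, one_mul]

lemma coe_mul_ne_bot {r : ℝ} (hr : 0 ≤ r) {x : EReal} (hx : x ≠ ⊥) : (r : EReal) * x ≠ ⊥ := by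
  rw [mul_ne_bot]
  exact ⟨.inl (coe_ne_bot r), .inr hx, .inl (coe_ne_top r), .inl (EReal.coe_nonneg.2 hr)⟩

end EReal

section Semicontinuity

variable {α : Type*} [TopologicalSpace α]

lemma LowerSemicontinuous.ereal_add {f g : α → EReal} (hf : LowerSemicontinuous f)
    (hg : LowerSemicontinuous g) : LowerSemicontinuous fun x => f x + g x := by
  intro x
  by_cases hfx : f x = ⊥
  · intro y hy
    simp [hfx] at hy
  by_cases hgx : g x = ⊥
  · intro y hy
    simp [hgx] at hy
  exact LowerSemicontinuousAt.add' (hf x) (hg x) (EReal.continuousAt_add (.inr hgx) (.inl hfx))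

lemma lowerSemicontinuous_ereal_sum {ι : Type*} (s : Finset ι) {f : ι → α → EReal}
    (hf : ∀ i ∈ s, LowerSemicontinuous (f i)) :
    LowerSemicontinuous fun x => ∑ i ∈ s, f i x := by
  classical
  induction s using Finset.induction_on with
  | empty => simpa using lowerSemicontinuous_const
  | insert j s hj ih =>
    simp only [Finset.sum_insert hj]
    exact (hf j (s.mem_insert_self j)).ereal_add
      (ih fun i hi => hf i (Finset.mem_insert_of_mem hi))

lemma LowerSemicontinuous.ereal_const_mul {f : α → EReal} (hf : LowerSemicontinuous f) {r : ℝ}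
    (hr : 0 ≤ r) : LowerSemicontinuous fun x => (r : EReal) * f x := by
  rcases hr.eq_or_lt with rfl | hr
  · simpa using lowerSemicontinuous_const
  have hr0 : (r : EReal) ≠ 0 := EReal.coe_ne_zero.2 hr.ne'
  have hcont : Continuous fun y : EReal => (r : EReal) * y :=
    continuous_iff_continuousAt.2 fun y =>
      (EReal.continuousAt_mul (.inl hr0) (.inl hr0) (.inl (EReal.coe_ne_bot r))
        (.inl (EReal.coe_ne_top r))).comp
        (continuous_const.prodMk continuous_id).continuousAt
  exact hcont.comp_lowerSemicontinuous hf fun _ _ h =>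
    mul_le_mul_of_nonneg_left h (EReal.coe_nonneg.2 hr.le)

end Semicontinuity

section WeightedSum

variable {ι : Type*} [Fintype ι]

def weightedSum (c : ι → EReal) (w : ι → ℝ) : EReal := ∑ i, (w i : EReal) * c i

def openSimplex (ι : Type*) [Fintype ι] : Set (ι → ℝ) :=
  (univ.pi fun _ => Ioi 0) ∩ stdSimplex ℝ ι

variable {c d : ι → EReal} {w v : ι → ℝ}

lemma weightedSum_add (hw : 0 ≤ w) (hv : 0 ≤ v) :
    weightedSum c (w + v) = weightedSum c w + weightedSum c v := by
  simp only [weightedSum, ← Finset.sum_add_distrib, Pi.add_apply, EReal.coe_add]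
  exact Finset.sum_congr rfl fun i _ =>
    EReal.right_distrib_of_nonneg (EReal.coe_nonneg.2 (hw i)) (EReal.coe_nonneg.2 (hv i))

lemma weightedSum_smul {a : ℝ} (ha : 0 ≤ a) (w : ι → ℝ) :
    weightedSum c (a • w) = a * weightedSum c w := by
  simp only [weightedSum, EReal.coe_mul_sum_of_nonneg _ _ ha, Pi.smul_apply, smul_eq_mul,
    EReal.coe_mul, mul_assoc]

lemma weightedSum_sum_smul {κ : Type*} (s : Finset κ) {a : κ → ℝ} {q : κ → ι → ℝ}
    (ha : ∀ k ∈ s, 0 ≤ a k) (hq : ∀ k ∈ s, 0 ≤ q k) :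
    weightedSum c (∑ k ∈ s, a k • q k) = ∑ k ∈ s, (a k : EReal) * weightedSum c (q k) := by
  classical
  induction s using Finset.induction_on with
  | empty => simp [weightedSum]
  | insert k s hk ih =>
    have hs : ∀ l ∈ s, 0 ≤ a l • q l := fun l hl =>
      smul_nonneg (ha l (Finset.mem_insert_of_mem hl)) (hq l (Finset.mem_insert_of_mem hl))
    rw [Finset.sum_insert hk, Finset.sum_insert hk,
      weightedSum_add (smul_nonneg (ha k (s.mem_insert_self k)) (hq k (s.mem_insert_self k)))
        (Finset.sum_nonneg hs),
      weightedSum_smul (ha k (s.mem_insert_self k)),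
      ih (fun l hl => ha l (Finset.mem_insert_of_mem hl))
        (fun l hl => hq l (Finset.mem_insert_of_mem hl))]

lemma weightedSum_mono (hw : 0 ≤ w) (hcd : c ≤ d) : weightedSum c w ≤ weightedSum d w :=
  Finset.sum_le_sum fun i _ => mul_le_mul_of_nonneg_left (hcd i) (EReal.coe_nonneg.2 (hw i))

lemma weightedSum_coe_mul_add_coe_mul {a b : ℝ} (ha : 0 ≤ a) (hb : 0 ≤ b) (hw : 0 ≤ w) :
    weightedSum (fun i => (a : EReal) * c i + (b : EReal) * d i) w =
      a * weightedSum c w + b * weightedSum d w := by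
  simp only [weightedSum, EReal.coe_mul_sum_of_nonneg _ _ ha, EReal.coe_mul_sum_of_nonneg _ _ hb,
    ← Finset.sum_add_distrib]
  refine Finset.sum_congr rfl fun i _ => ?_
  rw [EReal.left_distrib_of_nonneg_of_ne_top (EReal.coe_nonneg.2 (hw i)) (EReal.coe_ne_top _),
    mul_left_comm, mul_left_comm (w i : EReal)]

lemma weightedSum_coe (r : ι → ℝ) (w : ι → ℝ) :
    weightedSum (fun i => (r i : EReal)) w = ((∑ i, w i * r i : ℝ) : EReal) := by
  simp only [weightedSum, ← EReal.coe_mul]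
  exact (map_sum (⟨⟨Real.toEReal, EReal.coe_zero⟩, EReal.coe_add⟩ : ℝ →+ EReal) _ _).symm

lemma weightedSum_eq_top (hc : ∀ i, c i ≠ ⊥) {j : ι} (hj : c j = ⊤) (hw : 0 ≤ w)
    (hwj : 0 < w j) : weightedSum c w = ⊤ := by
  rw [weightedSum, ← Finset.add_sum_erase _ _ (Finset.mem_univ j), hj,
    EReal.coe_mul_top_of_pos hwj, EReal.top_add_of_ne_bot]
  exact WithBot.sum_eq_bot_iff.not.2 fun ⟨i, _, hi⟩ => EReal.coe_mul_ne_bot (hw i) (hc i) hi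

lemma weightedSum_eq_coe (hc : ∀ i, c i ≠ ⊥) (hc' : ∀ i, c i ≠ ⊤) :
    weightedSum c = fun w => ((∑ i, w i * (c i).toReal : ℝ) : EReal) := by
  conv_lhs => rw [show c = fun i => ((c i).toReal : EReal) from
    funext fun i => (EReal.coe_toReal (hc' i) (hc i)).symm]
  exact funext (weightedSum_coe _)

lemma convex_openSimplex : Convex ℝ (openSimplex ι) :=
  (convex_pi fun _ _ => convex_Ioi 0).inter (convex_stdSimplex ℝ ι)

lemma nonneg_of_mem_openSimplex (hw : w ∈ openSimplex ι) : 0 ≤ w :=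
  fun i => (hw.1 i (mem_univ i)).le

lemma smul_single_add_smul_uniform_mem_openSimplex [Nonempty ι] (j : ι) {ε : ℝ} (hε : ε ∈ Ioo 0 1) :
    (1 - ε) • Pi.single j 1 + ε • (fun _ => (Fintype.card ι : ℝ)⁻¹) ∈ openSimplex ι := by
  refine ⟨fun i _ => ?_, convex_stdSimplex ℝ ι (single_mem_stdSimplex ℝ j) ?_ (by linarith [hε.2])
    hε.1.le (by ring)⟩
  · have hsingle : 0 ≤ (1 - ε) * (Pi.single j 1 : ι → ℝ) i :=
      mul_nonneg (by linarith [hε.2]) ((single_mem_stdSimplex ℝ j).1 i)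
    have huniform : 0 < ε * (Fintype.card ι : ℝ)⁻¹ := mul_pos hε.1 (by simp [Fintype.card_pos])
    simp only [Pi.add_apply, Pi.smul_apply, smul_eq_mul, mem_Ioi]
    linarith
  · refine ⟨fun _ => by positivity, ?_⟩
    simp [Finset.card_univ]

lemma quasiconcaveOn_weightedSum {s : Set (ι → ℝ)} (hs : Convex ℝ s) (hs0 : ∀ w ∈ s, 0 ≤ w) :
    QuasiconcaveOn ℝ s (weightedSum c) := by
  intro r w ⟨hw, hrw⟩ v ⟨hv, hrv⟩ a b ha hb hab
  refine ⟨hs hw hv ha hb hab, ?_⟩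
  rw [weightedSum_add (smul_nonneg ha (hs0 w hw)) (smul_nonneg hb (hs0 v hv)),
    weightedSum_smul ha, weightedSum_smul hb, ← EReal.coe_mul_add_coe_mul_self ha hb hab r]
  exact add_le_add (mul_le_mul_of_nonneg_left hrw (EReal.coe_nonneg.2 ha))
    (mul_le_mul_of_nonneg_left hrv (EReal.coe_nonneg.2 hb))

lemma upperSemicontinuousOn_weightedSum (hc : ∀ i, c i ≠ ⊥) :
    UpperSemicontinuousOn (weightedSum c) (openSimplex ι) := by
  by_cases htop : ∃ j, c j = ⊤
  · obtain ⟨j, hj⟩ := htop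
    intro w hw y hy
    rw [weightedSum_eq_top hc hj (nonneg_of_mem_openSimplex hw) (hw.1 j (mem_univ j))] at hy
    exact absurd hy not_top_lt
  push Not at htop
  rw [weightedSum_eq_coe hc htop]
  exact (continuous_coe_real_ereal.comp (by fun_prop)).upperSemicontinuous.upperSemicontinuousOn _

lemma le_iSup_openSimplex_weightedSum (hc : ∀ i, c i ≠ ⊥) (j : ι) :
    c j ≤ ⨆ w ∈ openSimplex ι, weightedSum c w := by
  have : Nonempty ι := ⟨j⟩
  set γ : ℝ → ι → ℝ := fun ε => (1 - ε) • Pi.single j 1 + ε • (fun _ => (Fintype.card ι : ℝ)⁻¹)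
  by_cases htop : ∃ i, c i = ⊤
  · obtain ⟨i, hi⟩ := htop
    have hγ := smul_single_add_smul_uniform_mem_openSimplex j (ε := 1 / 2) (by norm_num)
    exact le_top.trans (le_iSup₂_of_le _ hγ
      (weightedSum_eq_top hc hi (nonneg_of_mem_openSimplex hγ) (hγ.1 i (mem_univ i))).ge)
  push Not at htop
  rw [weightedSum_eq_coe hc htop, ← EReal.coe_toReal (htop j) (hc j)]
  have hφ : Tendsto (fun ε => ∑ i, γ ε i * (c i).toReal) (𝓝[>] 0) (𝓝 (c j).toReal) := by
    have hcont : Continuous fun ε => ∑ i, γ ε i * (c i).toReal := by fun_prop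
    simpa [γ, Pi.single_apply] using hcont.continuousWithinAt.tendsto (x := 0) (s := Ioi 0)
  refine le_of_tendsto (continuous_coe_real_ereal.continuousAt.tendsto.comp hφ) ?_
  filter_upwards [Ioo_mem_nhdsGT one_pos] with ε hε
  exact le_iSup₂_of_le (γ ε) (smul_single_add_smul_uniform_mem_openSimplex j hε) le_rfl

end WeightedSum

section ERealConvex

variable {E : Type*} [AddCommGroup E] [Module ℝ E]

-- Mathlib's `ConvexOn` needs an `ℝ`-action on the codomain, which `EReal` does not carry.
def ERealConvexOn (s : Set E) (f : E → EReal) : Prop :=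
  Convex ℝ s ∧ ∀ ⦃x⦄, x ∈ s → ∀ ⦃y⦄, y ∈ s → ∀ ⦃a b : ℝ⦄, 0 ≤ a → 0 ≤ b → a + b = 1 →
    f (a • x + b • y) ≤ a * f x + b * f y

variable {s : Set E} {f : E → EReal}

lemma ERealConvexOn.quasiconvexOn (hf : ERealConvexOn s f) : QuasiconvexOn ℝ s f := by
  intro r x ⟨hx, hxr⟩ y ⟨hy, hyr⟩ a b ha hb hab
  refine ⟨hf.1 hx hy ha hb hab, (hf.2 hx hy ha hb hab).trans ?_⟩
  rw [← EReal.coe_mul_add_coe_mul_self ha hb hab r]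
  exact add_le_add (mul_le_mul_of_nonneg_left hxr (EReal.coe_nonneg.2 ha))
    (mul_le_mul_of_nonneg_left hyr (EReal.coe_nonneg.2 hb))

lemma ERealConvexOn.eq_bot_of_eq_bot [TopologicalSpace E] [IsTopologicalAddGroup E]
    [ContinuousSMul ℝ E] (hf : ERealConvexOn s f) (hlsc : LowerSemicontinuousOn f s) {x y : E}
    (hx : x ∈ s) (hfx : f x = ⊥) (hy : y ∈ s) : f y = ⊥ := by
  by_contra hfy
  set γ : ℝ → E := fun t => t • x + (1 - t) • y
  have hγ : Tendsto γ (𝓝[>] 0) (𝓝[s] y) := by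
    refine tendsto_nhdsWithin_iff.2 ⟨?_, ?_⟩
    · have : Continuous γ := by fun_prop
      simpa [γ] using this.continuousWithinAt.tendsto (x := 0) (s := Ioi 0)
    · filter_upwards [Ioo_mem_nhdsGT one_pos] with t ht
      exact hf.1 hx hy ht.1.le (by linarith [ht.2]) (by ring)
  obtain ⟨t, hlt, ht⟩ :=
    ((hγ.eventually (hlsc y hy ⊥ (bot_lt_iff_ne_bot.2 hfy))).and (Ioo_mem_nhdsGT one_pos)).exists
  have hle : f (γ t) ≤ t * f x + (1 - t : ℝ) * f y :=
    hf.2 hx hy ht.1.le (by linarith [ht.2]) (by ring)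
  rw [hfx, EReal.coe_mul_bot_of_pos ht.1, EReal.bot_add] at hle
  exact (hlt.trans_le hle).false

end ERealConvex

section ExpLoss

variable {X Y : Type*} [Fintype Y]

lemma ruleSet_eq_pi : ruleSet X Y = univ.pi fun _ => stdSimplex ℝ Y := by
  ext h
  simp [ruleSet, probSimplex, stdSimplex]

lemma isCompact_ruleSet : IsCompact (ruleSet X Y) := by
  rw [ruleSet_eq_pi]
  exact isCompact_univ_pi fun _ => isCompact_stdSimplex ℝ Y

lemma convex_ruleSet : Convex ℝ (ruleSet X Y) := by
  rw [ruleSet_eq_pi]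
  exact convex_pi fun _ _ => convex_stdSimplex ℝ Y

lemma ruleSet_nonempty [Nonempty Y] : (ruleSet X Y).Nonempty :=
  ⟨fun _ => Pi.single (Classical.arbitrary Y) 1, fun _ => single_mem_stdSimplex ℝ _⟩

variable [Fintype X] (L : (Y → ℝ) → Y → EReal)

lemma expLoss_eq_weightedSum (h : X → Y → ℝ) (p : X × Y → ℝ) :
    expLoss L h p = weightedSum (fun z => L (h z.1) z.2) p := rfl

lemma expLoss_sum_smul {ι : Type*} [Fintype ι] (h : X → Y → ℝ) {w : ι → ℝ}
    {q : ι → X × Y → ℝ} (hw : 0 ≤ w) (hq : ∀ i, 0 ≤ q i) :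
    expLoss L h (∑ i, w i • q i) = weightedSum (fun i => expLoss L h (q i)) w :=
  weightedSum_sum_smul _ (fun i _ => hw i) fun i _ => hq i

variable {L}

lemma lowerSemicontinuous_expLoss (hL : ∀ y, LowerSemicontinuous fun q : Y → ℝ => L q y)
    {p : X × Y → ℝ} (hp : 0 ≤ p) : LowerSemicontinuous fun h : X → Y → ℝ => expLoss L h p :=
  lowerSemicontinuous_ereal_sum _ fun z _ =>
    ((hL z.2).comp (continuous_apply z.1)).ereal_const_mul (hp z)

lemma eRealConvexOn_expLoss (hL : ConvexInFirst L) {p : X × Y → ℝ} (hp : 0 ≤ p) :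
    ERealConvexOn (ruleSet X Y) fun h => expLoss L h p := by
  refine ⟨convex_ruleSet, fun h₀ h₀R h₁ h₁R a b ha hb hab => ?_⟩
  obtain rfl : b = 1 - a := by linarith
  simp only [expLoss_eq_weightedSum, ← weightedSum_coe_mul_add_coe_mul ha hb hp]
  exact weightedSum_mono hp fun z => hL z.2 _ _ (h₀R z.1) (h₁R z.1) a ha (by linarith)

end ExpLoss

section Minimax

variable {X Y : Type*} [Fintype X] [Fintype Y] [Nonempty Y] {L : (Y → ℝ) → Y → EReal}
  {U : Set (X × Y → ℝ)}

lemma le_iSup_iInf_expLoss_of_finite_cover (hL : ∀ y, LowerSemicontinuous fun q : Y → ℝ => L q y)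
    (hLconv : ConvexInFirst L) (hU0 : ∀ p ∈ U, 0 ≤ p) (hUconv : Convex ℝ U)
    {ι : Type*} [Fintype ι] {q : ι → X × Y → ℝ} (hqU : ∀ i, q i ∈ U)
    (hq : ∀ i, ∀ h ∈ ruleSet X Y, expLoss L h (q i) ≠ ⊥) {t : EReal}
    (ht : ∀ h ∈ ruleSet X Y, ∃ i, t < expLoss L h (q i)) :
    t ≤ ⨆ p ∈ U, ⨅ h ∈ ruleSet X Y, expLoss L h p := by
  have hmix : ∀ w ∈ openSimplex ι, ∀ h : X → Y → ℝ,
      weightedSum (fun i => expLoss L h (q i)) w = expLoss L h (∑ i, w i • q i) :=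
    fun w hw h => (expLoss_sum_smul L h (nonneg_of_mem_openSimplex hw) fun i => hU0 _ (hqU i)).symm
  have hmix0 : ∀ w ∈ openSimplex ι, 0 ≤ ∑ i, w i • q i := fun w hw =>
    Finset.sum_nonneg fun i _ => smul_nonneg (nonneg_of_mem_openSimplex hw i) (hU0 _ (hqU i))
  have hminimax := Sion.minimax' (f := fun h w => weightedSum (fun i => expLoss L h (q i)) w)
    ruleSet_nonempty convex_ruleSet isCompact_ruleSet
    (fun w hw => by
      simp only [hmix w hw]
      exact (lowerSemicontinuous_expLoss hL (hmix0 w hw)).lowerSemicontinuousOn _)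
    (fun w hw => by
      simp only [hmix w hw]
      exact (eRealConvexOn_expLoss hLconv (hmix0 w hw)).quasiconvexOn)
    convex_openSimplex
    (fun h hh => upperSemicontinuousOn_weightedSum fun i => hq i h hh)
    (fun _ _ => quasiconcaveOn_weightedSum convex_openSimplex fun _ => nonneg_of_mem_openSimplex)
  calc t ≤ ⨅ h ∈ ruleSet X Y, ⨆ w ∈ openSimplex ι, weightedSum (fun i => expLoss L h (q i)) w :=
        le_iInf₂ fun h hh => by
          obtain ⟨i, hi⟩ := ht h hh
          exact hi.le.trans (le_iSup_openSimplex_weightedSum (fun i => hq i h hh) i)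
    _ = ⨆ w ∈ openSimplex ι, ⨅ h ∈ ruleSet X Y, weightedSum (fun i => expLoss L h (q i)) w :=
        hminimax
    _ ≤ ⨆ p ∈ U, ⨅ h ∈ ruleSet X Y, expLoss L h p := iSup₂_le fun w hw => by
        simp only [hmix w hw]
        exact le_iSup₂_of_le (∑ i, w i • q i)
          (hUconv.sum_mem (fun i _ => nonneg_of_mem_openSimplex hw i) hw.2.2 fun i _ => hqU i)
          le_rfl

theorem iInf_iSup_expLoss_eq_iSup_iInf (hL : ∀ y, LowerSemicontinuous fun q : Y → ℝ => L q y)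
    (hLconv : ConvexInFirst L) (hU0 : ∀ p ∈ U, 0 ≤ p) (hUconv : Convex ℝ U) :
    ⨅ h ∈ ruleSet X Y, ⨆ p ∈ U, expLoss L h p = ⨆ p ∈ U, ⨅ h ∈ ruleSet X Y, expLoss L h p := by
  refine le_antisymm (le_of_forall_lt_imp_le_of_dense fun t ht => ?_)
    (iSup₂_iInf₂_le_iInf₂_iSup₂ _ _ _)
  set U' := {p ∈ U | ∀ h ∈ ruleSet X Y, expLoss L h p ≠ ⊥}
  have hcover : ∀ h ∈ ruleSet X Y, ∃ p ∈ U', t < expLoss L h p := by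
    intro h hh
    obtain ⟨p, hp, htp⟩ := lt_biSup_iff.1 (ht.trans_le (iInf₂_le h hh))
    refine ⟨p, ⟨hp, fun h' hh' hbot => ?_⟩, htp⟩
    have := (eRealConvexOn_expLoss hLconv (hU0 p hp)).eq_bot_of_eq_bot
      ((lowerSemicontinuous_expLoss hL (hU0 p hp)).lowerSemicontinuousOn _) hh' hbot hh
    exact not_lt_bot (this ▸ htp)
  obtain ⟨u, hu⟩ := (LowerSemicontinuousOn.inter_biInter_preimage_Iic_eq_empty_iff_exists_finset
    (f := fun p h => expLoss L h p) (I := U') (c := t) isCompact_ruleSet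
    fun p hp => (lowerSemicontinuous_expLoss hL (hU0 p hp.1)).lowerSemicontinuousOn _).1 <|
      eq_empty_of_forall_notMem fun h ⟨hh, hle⟩ => by
        obtain ⟨p, hp, htp⟩ := hcover h hh
        exact (mem_iInter₂.1 hle p hp).not_gt htp
  refine le_iSup_iInf_expLoss_of_finite_cover hL hLconv hU0 hUconv (q := fun i : u => (i : U').1)
    (fun i => i.1.2.1) (fun i => i.1.2.2) fun h hh => ?_
  obtain ⟨i, hi, hti⟩ := hu h hh
  exact ⟨⟨i, hi⟩, hti⟩

end Minimax

theorem statement0_general {X Y : Type*} [Fintype X] [Fintype Y] [Nonempty Y]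
    (L : (Y → ℝ) → Y → EReal)
    (hLlsc : ∀ y, LowerSemicontinuous fun q : Y → ℝ => L q y)
    (hLconv : ConvexInFirst L)
    (U : Set (X × Y → ℝ)) (hUsub : U ⊆ probSimplex (X × Y))
    (hUconv : Convex ℝ U) :
    ((⨅ h ∈ ruleSet X Y, ⨆ p ∈ U, expLoss L h p) =
        ⨆ p ∈ U, ⨅ h ∈ ruleSet X Y, expLoss L h p) ∧
    ((⨅ h ∈ ruleSet X Y, ⨆ p ∈ U, expLoss L h p) = maxEntropy L U) ∧
    (∀ hU ∈ ruleSet X Y,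
      (∀ h ∈ ruleSet X Y,
          (⨆ p ∈ U, expLoss L hU p) ≤ ⨆ p ∈ U, expLoss L h p) →
      ∀ pU ∈ U, (∀ p ∈ U, entropyFn L p ≤ entropyFn L pU) →
        expLoss L hU pU = maxEntropy L U ∧
        (∀ h ∈ ruleSet X Y, expLoss L hU pU ≤ expLoss L h pU) ∧
        (∀ p ∈ U, expLoss L hU p ≤ expLoss L hU pU)) := by
  have hminimax := iInf_iSup_expLoss_eq_iSup_iInf hLlsc hLconv (fun p hp => (hUsub hp).1) hUconv
  refine ⟨hminimax, hminimax, fun hU hUR hUopt pU hpU hpUopt => ?_⟩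
  have hsaddle : IsSaddlePointOn (ruleSet X Y) U (fun h p => expLoss L h p) hU pU := by
    rw [isSaddlePointOn_iff' hUR hpU]
    calc ⨆ p ∈ U, expLoss L hU p ≤ ⨅ h ∈ ruleSet X Y, ⨆ p ∈ U, expLoss L h p := le_iInf₂ hUopt
      _ = ⨆ p ∈ U, entropyFn L p := hminimax
      _ ≤ entropyFn L pU := iSup₂_le hpUopt
  exact ⟨(isSaddlePointOn_value hUR hpU hsaddle).2.symm, fun h hh => hsaddle h hh pU hpU,
    fun p hp => hsaddle hU hUR p hp⟩

/-- minimax = maximin = maximum entropy, and properties of the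
MRC `hU` and the maximum entropy distribution `pU`. -/
theorem statement0 {X Y : Type*} [Fintype X] [Fintype Y] [Nonempty X] [Nonempty Y]
    (L : (Y → ℝ) → Y → EReal)
    (hLlsc : ∀ y, LowerSemicontinuous fun q : Y → ℝ => L q y)
    (hLconv : ConvexInFirst L)
    (U : Set (X × Y → ℝ)) (hUsub : U ⊆ probSimplex (X × Y))
    (hUconv : Convex ℝ U) (hUcomp : IsCompact U) :
    ((⨅ h ∈ ruleSet X Y, ⨆ p ∈ U, expLoss L h p) =
        ⨆ p ∈ U, ⨅ h ∈ ruleSet X Y, expLoss L h p) ∧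
    ((⨅ h ∈ ruleSet X Y, ⨆ p ∈ U, expLoss L h p) = maxEntropy L U) ∧
    (∀ hU ∈ ruleSet X Y,
      (∀ h ∈ ruleSet X Y,
          (⨆ p ∈ U, expLoss L hU p) ≤ ⨆ p ∈ U, expLoss L h p) →
      ∀ pU ∈ U, (∀ p ∈ U, entropyFn L p ≤ entropyFn L pU) →
        expLoss L hU pU = maxEntropy L U ∧
        (∀ h ∈ ruleSet X Y, expLoss L hU pU ≤ expLoss L h pU) ∧
        (∀ p ∈ U, expLoss L hU p ≤ expLoss L hU pU)) :=
  statement0_general L hLlsc hLconv U hUsub hUconv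
end
end

section
/- Let (x_1,y_1),…,(x_n,y_n) ∈ X×Y, τ_n = (1/n)Σ_{i=1}^n Φ(x_i,y_i), λ ∈ ℝ^m with λ ≥ 0, a_n = τ_n − λ/√n and b_n = τ_n + λ/√n. Then the optimal value of the dual problem 𝒫^{a_n,b_n} equals the infimum, over (μ,ν) ∈ ℝ^m×ℝ such that (y ↦ Φ(x,y)ᵀμ + ν) ∈ 𝓛 for every x ∈ X, of −(1/n)Σ_{i=1}^n Φ(x_i,y_i)ᵀμ − ν + (1/√n)Σ_{i=1}^m λ^{(i)}|μ^{(i)}|. In particular, when λ^{(i)} = λ̄ for all i the penalty term equals (λ̄/√n)·‖μ‖₁, so the dual problem corresponds to L1-regularized learning. -/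
open scoped BigOperators Classical

noncomputable section

theorem half_sum_sub_mul_add_sub_eq {ι : Type*} [Fintype ι] {τ r a b : ι → ℝ}
    (ha : ∀ i, a i = τ i - r i) (hb : ∀ i, b i = τ i + r i) (μ η : ι → ℝ) (ν : ℝ) :
    (1/2) * (∑ i, (b i - a i) * η i) - (1/2) * (∑ i, (b i + a i) * μ i) - ν =
      ∑ i, r i * η i + (-∑ i, τ i * μ i - ν) := by
  have hwidth : (1/2) * (∑ i, (b i - a i) * η i) = ∑ i, r i * η i := by
    rw [Finset.mul_sum]
    exact Finset.sum_congr rfl fun i _ => by rw [ha, hb]; ring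
  have hcenter : (1/2) * (∑ i, (b i + a i) * μ i) = ∑ i, τ i * μ i := by
    rw [Finset.mul_sum]
    exact Finset.sum_congr rfl fun i _ => by rw [ha, hb]; ring
  rw [hwidth, hcenter]
  ring

theorem sum_mul_eq_mul_sum_sum_mul {ι κ : Type*} [Fintype ι] [Fintype κ] {τ : ι → ℝ}
    {c : ℝ} {v : κ → ι → ℝ} (hτ : ∀ i, τ i = c * ∑ j, v j i) (μ : ι → ℝ) :
    ∑ i, τ i * μ i = c * ∑ j, ∑ i, v j i * μ i := by
  simp only [hτ, Finset.mul_sum, Finset.sum_mul, mul_assoc]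
  exact Finset.sum_comm

/-- The box constraints `-η ≤ μ ≤ η` say `|μ| ≤ η`, and for nonnegative weights `∑ wᵢ ηᵢ` is
smallest at `η = |μ|`. -/
theorem iInf_sum_mul_add_eq_iInf_sum_mul_abs_add {ι α β : Type*} [Fintype ι]
    [CompleteLattice β] {w : ι → ℝ} (hw : ∀ i, 0 ≤ w i) {F : ℝ → β} (hF : Monotone F)
    (P : (ι → ℝ) → α → Prop) (g : (ι → ℝ) → α → ℝ) :
    (⨅ (μ : ι → ℝ) (η : ι → ℝ) (ν : α)
        (_ : P μ ν ∧ (∀ i, 0 ≤ η i + μ i) ∧ (∀ i, 0 ≤ η i - μ i)),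
        F (∑ i, w i * η i + g μ ν)) =
      ⨅ (μ : ι → ℝ) (ν : α) (_ : P μ ν), F (∑ i, w i * |μ i| + g μ ν) := by
  apply le_antisymm
  · refine le_iInf fun μ => le_iInf₂ fun ν hP =>
      iInf_le_of_le μ <| iInf_le_of_le (fun i => |μ i|) <| iInf₂_le_of_le ν
        ⟨hP, fun i => ?_, fun i => ?_⟩ le_rfl
    · linarith [neg_abs_le (μ i)]
    · linarith [le_abs_self (μ i)]
  · refine le_iInf₂ fun μ η => le_iInf₂ fun ν ⟨hP, hneg, hpos⟩ =>
      iInf₂_le_of_le μ ν <| iInf_le_of_le hP ?_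
    have habs (i : ι) : |μ i| ≤ η i := abs_le.2 ⟨by linarith [hneg i], by linarith [hpos i]⟩
    exact hF <| add_le_add_left
      (Finset.sum_le_sum fun i _ => mul_le_mul_of_nonneg_left (habs i) (hw i)) _

theorem statement3_general {X Y : Type*} [Fintype Y]
    {m : ℕ} (L : (Y → ℝ) → Y → EReal)
    (Φ : X × Y → Fin m → ℝ)
    (n : ℕ) (s : Fin n → X × Y)
    (lam : Fin m → ℝ) (hlam : ∀ i, 0 ≤ lam i)
    (τn an bn : Fin m → ℝ)
    (hτ : ∀ i, τn i = (1 / (n : ℝ)) * ∑ j, Φ (s j) i)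
    (han : ∀ i, an i = τn i - lam i / Real.sqrt n)
    (hbn : ∀ i, bn i = τn i + lam i / Real.sqrt n) :
    ((⨅ (μ : Fin m → ℝ) (η : Fin m → ℝ) (ν : ℝ)
        (_ : (∀ x : X, (fun y => (∑ i, Φ (x, y) i * μ i) + ν) ∈ LsetOf L) ∧
          (∀ i, 0 ≤ η i + μ i) ∧ (∀ i, 0 ≤ η i - μ i)),
        (((1/2) * (∑ i, (bn i - an i) * η i) - (1/2) * (∑ i, (bn i + an i) * μ i) - ν : ℝ) :
          EReal)) =
      ⨅ (μ : Fin m → ℝ) (ν : ℝ)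
        (_ : ∀ x : X, (fun y => (∑ i, Φ (x, y) i * μ i) + ν) ∈ LsetOf L),
        ((-((1 / (n : ℝ)) * ∑ j, ∑ i, Φ (s j) i * μ i) - ν +
          (1 / Real.sqrt n) * ∑ i, lam i * |μ i| : ℝ) : EReal)) ∧
    (∀ (μ : Fin m → ℝ) (c : ℝ), (∀ i, lam i = c) →
      (1 / Real.sqrt n) * (∑ i, lam i * |μ i|) = c / Real.sqrt n * ∑ i, |μ i|) := by
  have hdual (μ η : Fin m → ℝ) (ν : ℝ) :
      (1/2) * (∑ i, (bn i - an i) * η i) - (1/2) * (∑ i, (bn i + an i) * μ i) - ν =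
        ∑ i, lam i / Real.sqrt n * η i +
          (-((1 / (n : ℝ)) * ∑ j, ∑ i, Φ (s j) i * μ i) - ν) := by
    rw [half_sum_sub_mul_add_sub_eq han hbn, sum_mul_eq_mul_sum_sum_mul hτ]
  have hregularized (μ : Fin m → ℝ) (ν : ℝ) :
      -((1 / (n : ℝ)) * ∑ j, ∑ i, Φ (s j) i * μ i) - ν +
          (1 / Real.sqrt n) * ∑ i, lam i * |μ i| =
        ∑ i, lam i / Real.sqrt n * |μ i| +
          (-((1 / (n : ℝ)) * ∑ j, ∑ i, Φ (s j) i * μ i) - ν) := by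
    rw [add_comm, Finset.mul_sum]
    exact congrArg (· + _) (Finset.sum_congr rfl fun i _ => by ring)
  refine ⟨?_, fun μ c hc => ?_⟩
  · simp only [hdual, hregularized]
    exact iInf_sum_mul_add_eq_iInf_sum_mul_abs_add
      (fun i => div_nonneg (hlam i) (Real.sqrt_nonneg _)) EReal.coe_strictMono.monotone _ _
  · simp only [hc, ← Finset.mul_sum]
    ring

/-- for interval estimates centered at the empirical expectation,
the dual problem is an L1-regularized empirical objective. -/
theorem statement3 {X Y : Type*} [Fintype X] [Fintype Y] [Nonempty X] [Nonempty Y]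
    {m : ℕ} (L : (Y → ℝ) → Y → EReal)
    (hLlsc : ∀ y, LowerSemicontinuous fun q : Y → ℝ => L q y)
    (hLconv : ConvexInFirst L)
    (Φ : X × Y → Fin m → ℝ)
    (n : ℕ) (hn : 0 < n) (s : Fin n → X × Y)
    (lam : Fin m → ℝ) (hlam : ∀ i, 0 ≤ lam i)
    (τn an bn : Fin m → ℝ)
    (hτ : ∀ i, τn i = (1 / (n : ℝ)) * ∑ j, Φ (s j) i)
    (han : ∀ i, an i = τn i - lam i / Real.sqrt n)
    (hbn : ∀ i, bn i = τn i + lam i / Real.sqrt n) :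
    ((⨅ (μ : Fin m → ℝ) (η : Fin m → ℝ) (ν : ℝ)
        (_ : (∀ x : X, (fun y => (∑ i, Φ (x, y) i * μ i) + ν) ∈ LsetOf L) ∧
          (∀ i, 0 ≤ η i + μ i) ∧ (∀ i, 0 ≤ η i - μ i)),
        (((1/2) * (∑ i, (bn i - an i) * η i) - (1/2) * (∑ i, (bn i + an i) * μ i) - ν : ℝ) :
          EReal)) =
      ⨅ (μ : Fin m → ℝ) (ν : ℝ)
        (_ : ∀ x : X, (fun y => (∑ i, Φ (x, y) i * μ i) + ν) ∈ LsetOf L),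
        ((-((1 / (n : ℝ)) * ∑ j, ∑ i, Φ (s j) i * μ i) - ν +
          (1 / Real.sqrt n) * ∑ i, lam i * |μ i| : ℝ) : EReal)) ∧
    (∀ (μ : Fin m → ℝ) (c : ℝ), (∀ i, lam i = c) →
      (1 / Real.sqrt n) * (∑ i, lam i * |μ i|) = c / Real.sqrt n * ∑ i, |μ i|) :=
  statement3_general L Φ n s lam hlam τn an bn hτ han hbn
end
end

section
/- Fix α ∈ (1,∞) and set β = α/(α−1) (so β > 1). For a finite nonempty set Y and c : Y → ℝ, the following are equivalent: (i) there exists q ∈ Δ(Y) with c(y) + β·(1 − q(y)^{1/β}) ≤ 0 for all y ∈ Y; (ii) Σ_{y∈Y} (c(y)/β + 1)_+^β ≤ 1, where (t)_+ = max(t,0) and the positive part is computed before the power. Consequently, for the α-loss with score L_α(q,y) = β·(1 − q(y)^{1/β}), the constraint (y ↦ Φ(x,y)ᵀμ + ν) ∈ 𝓛 is equivalent to Σ_{y∈Y} ((Φ(x,y)ᵀμ + ν)/β + 1)_+^β ≤ 1. -/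
/-!
Since `t ↦ t ^ (1 / β)` is an increasing bijection of `[0, ∞)` for `β > 0`, the constraint
`c y + β * (1 - q y ^ (1 / β)) ≤ 0` says exactly that `q y` dominates `(c y / β + 1)₊ ^ β`.
A distribution dominating a nonnegative function exists iff that function has total mass at
most `1`: spread the missing mass uniformly over `Y`.
-/

open scoped BigOperators Classical

noncomputable section

lemma add_mul_one_sub_rpow_one_div_nonpos_iff {β c t : ℝ} (hβ : 0 < β) (ht : 0 ≤ t) :
    c + β * (1 - t ^ (1 / β)) ≤ 0 ↔ max (c / β + 1) 0 ^ β ≤ t := by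
  have hs : 0 ≤ t ^ (1 / β) := Real.rpow_nonneg ht _
  calc c + β * (1 - t ^ (1 / β)) ≤ 0 ↔ c / β + 1 ≤ t ^ (1 / β) := by
        rw [div_add_one hβ.ne', div_le_iff₀ hβ]
        constructor <;> intro h <;> linarith
    _ ↔ max (c / β + 1) 0 ≤ t ^ (1 / β) := by simp only [max_le_iff, hs, and_true]
    _ ↔ max (c / β + 1) 0 ^ β ≤ t := by
        rw [one_div, Real.le_rpow_inv_iff_of_pos (le_max_right _ _) ht hβ]

lemma exists_mem_probSimplex_forall_le_iff {Y : Type*} [Fintype Y] [Nonempty Y]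
    {f : Y → ℝ} (hf : ∀ y, 0 ≤ f y) :
    (∃ q ∈ probSimplex Y, ∀ y, f y ≤ q y) ↔ ∑ y, f y ≤ 1 := by
  constructor
  · rintro ⟨q, ⟨-, hq_sum⟩, hfq⟩
    exact hq_sum ▸ Finset.sum_le_sum fun y _ => hfq y
  · intro hf_sum
    have hcard : (0 : ℝ) < Fintype.card Y := by exact_mod_cast Fintype.card_pos
    set δ := (1 - ∑ y, f y) / Fintype.card Y
    have hδ : 0 ≤ δ := div_nonneg (by linarith) hcard.le
    refine ⟨fun y => f y + δ, ⟨fun y => add_nonneg (hf y) hδ, ?_⟩,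
      fun y => le_add_of_nonneg_right hδ⟩
    rw [Finset.sum_add_distrib, Finset.sum_const, Finset.card_univ, nsmul_eq_mul,
      mul_div_cancel₀ _ hcard.ne']
    ring

lemma mem_LsetOf_coe_iff {Y : Type*} [Fintype Y] (L : (Y → ℝ) → Y → ℝ) (c : Y → ℝ) :
    c ∈ LsetOf (fun q y => (L q y : EReal)) ↔
      ∃ q ∈ probSimplex Y, ∀ y, c y + L q y ≤ 0 := by
  simp only [LsetOf, Set.mem_ofPred_eq, ← EReal.coe_add, EReal.coe_nonpos]

/-- characterization of the feasibility set `𝓛` for the α-loss. -/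
theorem statement10 {X Y : Type*} [Fintype Y] [Nonempty Y]
    {m : ℕ} (Φ : X × Y → Fin m → ℝ)
    (α β : ℝ) (hα : 1 < α) (hβ : β = α / (α - 1)) :
    (∀ c : Y → ℝ,
      (∃ q ∈ probSimplex Y, ∀ y, c y + β * (1 - q y ^ (1 / β)) ≤ 0) ↔
        ∑ y, max (c y / β + 1) 0 ^ β ≤ 1) ∧
    (∀ (x : X) (μ : Fin m → ℝ) (ν : ℝ),
      ((fun y => (∑ i, Φ (x, y) i * μ i) + ν) ∈
          LsetOf fun (q : Y → ℝ) (y : Y) => ((β * (1 - q y ^ (1 / β)) : ℝ) : EReal)) ↔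
        ∑ y, max (((∑ i, Φ (x, y) i * μ i) + ν) / β + 1) 0 ^ β ≤ 1) := by
  have hβ_pos : 0 < β := hβ ▸ div_pos (by linarith) (by linarith)
  have feasible_iff : ∀ c : Y → ℝ,
      (∃ q ∈ probSimplex Y, ∀ y, c y + β * (1 - q y ^ (1 / β)) ≤ 0) ↔
        ∑ y, max (c y / β + 1) 0 ^ β ≤ 1 := fun c => by
    rw [← exists_mem_probSimplex_forall_le_iff fun y => Real.rpow_nonneg (le_max_right _ _) _]
    exact exists_congr fun q => and_congr_right fun hq => forall_congr' fun y =>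
      add_mul_one_sub_rpow_one_div_nonpos_iff hβ_pos (hq.1 y)
  exact ⟨feasible_iff, fun x μ ν => (mem_LsetOf_coe_iff _ _).trans (feasible_iff _)⟩
end
end

section
/- For a finite nonempty set Y and c : Y → ℝ, there exists q ∈ Δ(Y) with q(y) > 0 and c(y) − log q(y) ≤ 0 for all y ∈ Y if and only if Σ_{y∈Y} exp(c(y)) ≤ 1. Consequently, for the log-loss with score L(q,y) = −log q(y) (with value +∞ when q(y) = 0), the constraint (y ↦ Φ(x,y)ᵀμ + ν) ∈ 𝓛 is equivalent to Σ_{y∈Y} exp(Φ(x,y)ᵀμ + ν) ≤ 1. -/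
open scoped BigOperators Classical

noncomputable section

def logScore {Y : Type*} (q : Y → ℝ) (y : Y) : EReal :=
  if q y = 0 then ⊤ else ((-Real.log (q y) : ℝ) : EReal)

theorem coe_add_logScore_nonpos_iff {Y : Type*} {q : Y → ℝ} {y : Y} (hq : 0 ≤ q y) (a : ℝ) :
    (a : EReal) + logScore q y ≤ 0 ↔ 0 < q y ∧ a - Real.log (q y) ≤ 0 := by
  rcases hq.eq_or_lt with hzero | hpos
  · simp [logScore, ← hzero]
  · rw [logScore, if_neg hpos.ne', ← EReal.coe_add, EReal.coe_nonpos, ← sub_eq_add_neg]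
    exact (and_iff_right hpos).symm

theorem mem_LsetOf_logScore_iff {Y : Type*} [Fintype Y] (c : Y → ℝ) :
    c ∈ LsetOf logScore ↔ ∃ q ∈ probSimplex Y, ∀ y, 0 < q y ∧ c y - Real.log (q y) ≤ 0 :=
  exists_congr fun _ => and_congr_right fun hq =>
    forall_congr' fun y => coe_add_logScore_nonpos_iff (hq.1 y) (c y)

theorem sum_exp_le_one_of_le_log {Y : Type*} [Fintype Y] {c q : Y → ℝ}
    (hq : q ∈ probSimplex Y) (h : ∀ y, 0 < q y ∧ c y - Real.log (q y) ≤ 0) :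
    ∑ y, Real.exp (c y) ≤ 1 :=
  calc ∑ y, Real.exp (c y) ≤ ∑ y, q y := Finset.sum_le_sum fun y _ =>
        (Real.le_log_iff_exp_le (h y).1).mp (sub_nonpos.mp (h y).2)
    _ = 1 := hq.2

def softmax {Y : Type*} [Fintype Y] (c : Y → ℝ) (y : Y) : ℝ :=
  Real.exp (c y) / ∑ z, Real.exp (c z)

theorem sum_exp_pos {Y : Type*} [Fintype Y] [Nonempty Y] (c : Y → ℝ) :
    0 < ∑ y, Real.exp (c y) :=
  Finset.sum_pos (fun y _ => Real.exp_pos (c y)) Finset.univ_nonempty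

theorem softmax_pos {Y : Type*} [Fintype Y] [Nonempty Y] (c : Y → ℝ) (y : Y) :
    0 < softmax c y :=
  div_pos (Real.exp_pos _) (sum_exp_pos c)

theorem softmax_mem_probSimplex {Y : Type*} [Fintype Y] [Nonempty Y] (c : Y → ℝ) :
    softmax c ∈ probSimplex Y :=
  ⟨fun y => (softmax_pos c y).le, by
    simp only [softmax, ← Finset.sum_div, div_self (sum_exp_pos c).ne']⟩

theorem sub_log_softmax {Y : Type*} [Fintype Y] [Nonempty Y] (c : Y → ℝ) (y : Y) :
    c y - Real.log (softmax c y) = Real.log (∑ z, Real.exp (c z)) := by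
  rw [softmax, Real.log_div (Real.exp_pos _).ne' (sum_exp_pos c).ne', Real.log_exp]
  ring

theorem exists_mem_probSimplex_sub_log_nonpos_iff {Y : Type*} [Fintype Y] [Nonempty Y]
    (c : Y → ℝ) :
    (∃ q ∈ probSimplex Y, ∀ y, 0 < q y ∧ c y - Real.log (q y) ≤ 0) ↔
      ∑ y, Real.exp (c y) ≤ 1 := by
  refine ⟨fun ⟨q, hq, h⟩ => sum_exp_le_one_of_le_log hq h, fun hsum => ?_⟩
  refine ⟨softmax c, softmax_mem_probSimplex c, fun y => ⟨softmax_pos c y, ?_⟩⟩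
  rw [sub_log_softmax]
  exact Real.log_nonpos (sum_exp_pos c).le hsum

/-- characterization of the feasibility set `𝓛` for the log-loss. -/
theorem statement12 {X Y : Type*} [Fintype Y] [Nonempty Y]
    {m : ℕ} (Φ : X × Y → Fin m → ℝ) :
    (∀ c : Y → ℝ,
      (∃ q ∈ probSimplex Y, ∀ y, 0 < q y ∧ c y - Real.log (q y) ≤ 0) ↔
        ∑ y, Real.exp (c y) ≤ 1) ∧
    (∀ (x : X) (μ : Fin m → ℝ) (ν : ℝ),
      ((fun y => (∑ i, Φ (x, y) i * μ i) + ν) ∈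
          LsetOf fun (q : Y → ℝ) (y : Y) =>
            if q y = 0 then (⊤ : EReal) else ((-Real.log (q y) : ℝ) : EReal)) ↔
        ∑ y, Real.exp ((∑ i, Φ (x, y) i * μ i) + ν) ≤ 1) :=
  ⟨exists_mem_probSimplex_sub_log_nonpos_iff, fun _ _ _ =>
    (mem_LsetOf_logScore_iff _).trans (exists_mem_probSimplex_sub_log_nonpos_iff _)⟩
end
end

section
/- For a finite nonempty set Y and v : Y → ℝ, sup{ν ∈ ℝ : Σ_{y∈Y} (v(y) + ν + 1)_+ ≤ 1} = min over nonempty subsets C ⊆ Y of (1 − Σ_{y∈C} (v(y) + 1))/|C|, where (t)_+ = max(t,0). Consequently, for the 0-1 loss with score L(q,y) = 1 − q(y), the function φ_{0-1}(μ,x) = sup{ν ∈ ℝ : (y ↦ Φ(x,y)ᵀμ + ν) ∈ 𝓛} satisfies φ_{0-1}(μ,x) = min over nonempty subsets C ⊆ Y of (1 − Σ_{y∈C} (Φ(x,y)ᵀμ + 1))/|C|. -/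
/-!
Writing `w = v + 1`, the sum `∑ y, (w y + ν)₊` only sees the set `D` of labels where
`w y + ν > 0`, and there it equals `∑ y ∈ D, w y + |D| ν`. Hence `ν` is feasible iff
`∑ y ∈ C, w y + |C| ν ≤ 1` for every nonempty `C` (for `C = D` this is feasibility, and
every other `C` gives a smaller left side), i.e. the feasible set is the half-line below the
minimum. For the 0-1 score, `c ∈ 𝓛` iff some distribution dominates `(c + 1)₊`, i.e. iff
`∑ y, (c y + 1)₊ ≤ 1`, so `φ_{0-1}` is the first supremum with `v y = Φ(x,y)ᵀμ`.
-/


open scoped BigOperators Classical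

noncomputable section

open Finset

lemma le_div_card_iff_sum_add_le {Y : Type*} {C : Finset Y} (hC : C.Nonempty) (w : Y → ℝ)
    (r ν : ℝ) :
    ν ≤ (r - ∑ y ∈ C, w y) / C.card ↔ ∑ y ∈ C, (w y + ν) ≤ r := by
  rw [le_div_iff₀ (by exact_mod_cast hC.card_pos), sum_add_distrib, sum_const, nsmul_eq_mul]
  constructor <;> intro h <;> linarith

section

variable {Y : Type*} [Fintype Y]

lemma sum_max_zero_eq_sum_filter_pos (f : Y → ℝ) :
    ∑ y, max (f y) 0 = ∑ y with 0 < f y, f y := by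
  rw [sum_filter]
  refine sum_congr rfl fun y _ => ?_
  split_ifs with h
  · exact max_eq_left h.le
  · exact max_eq_right (not_lt.mp h)

lemma sum_max_add_le_iff (w : Y → ℝ) {r : ℝ} (hr : 0 ≤ r) (ν : ℝ) :
    ∑ y, max (w y + ν) 0 ≤ r ↔
      ∀ C : Finset Y, C.Nonempty → ν ≤ (r - ∑ y ∈ C, w y) / C.card := by
  refine ⟨fun h C hC => ?_, fun h => ?_⟩
  · rw [le_div_card_iff_sum_add_le hC]
    calc ∑ y ∈ C, (w y + ν) ≤ ∑ y ∈ C, max (w y + ν) 0 :=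
          sum_le_sum fun y _ => le_max_left _ _
      _ ≤ ∑ y, max (w y + ν) 0 :=
          sum_le_sum_of_subset_of_nonneg (subset_univ C) fun y _ _ => le_max_right _ _
      _ ≤ r := h
  · rw [sum_max_zero_eq_sum_filter_pos]
    rcases (univ.filter fun y => 0 < w y + ν).eq_empty_or_nonempty with hD | hD
    · rw [hD, sum_empty]
      exact hr
    · exact (le_div_card_iff_sum_add_le hD w r ν).mp (h _ hD)

theorem sSup_setOf_sum_max_add_le [Nonempty Y] (w : Y → ℝ) {r : ℝ} (hr : 0 ≤ r) :
    sSup {ν : ℝ | ∑ y, max (w y + ν) 0 ≤ r} =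
      ⨅ C : {C : Finset Y // C.Nonempty}, (r - ∑ y ∈ C.1, w y) / C.1.card := by
  have : Nonempty {C : Finset Y // C.Nonempty} := ⟨⟨univ, univ_nonempty⟩⟩
  suffices {ν : ℝ | ∑ y, max (w y + ν) 0 ≤ r} =
      Set.Iic (⨅ C : {C : Finset Y // C.Nonempty}, (r - ∑ y ∈ C.1, w y) / C.1.card) by
    rw [this, csSup_Iic]
  ext ν
  rw [Set.mem_Iic, le_ciInf_iff (Set.finite_range _).bddBelow, Set.mem_ofPred_eq,
    sum_max_add_le_iff w hr]
  exact ⟨fun h C => h C.1 C.2, fun h C hC => h ⟨C, hC⟩⟩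

lemma exists_mem_probSimplex_le [Nonempty Y] {u : Y → ℝ} (hu : ∀ y, 0 ≤ u y)
    (hsum : ∑ y, u y ≤ 1) :
    ∃ q ∈ probSimplex Y, ∀ y, u y ≤ q y := by
  have hcard : (0 : ℝ) < Fintype.card Y := by exact_mod_cast Fintype.card_pos
  set δ := (1 - ∑ y, u y) / Fintype.card Y
  have hδ : 0 ≤ δ := div_nonneg (by linarith) hcard.le
  refine ⟨fun y => u y + δ, ⟨fun y => add_nonneg (hu y) hδ, ?_⟩,
    fun y => le_add_of_nonneg_right hδ⟩
  rw [sum_add_distrib, sum_const, card_univ, nsmul_eq_mul, mul_div_cancel₀ _ hcard.ne']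
  ring

end

lemma mem_LsetOf_zeroOne_iff {Y : Type*} [Fintype Y] [Nonempty Y] (c : Y → ℝ) :
    c ∈ LsetOf (fun (q : Y → ℝ) (y : Y) => ((1 - q y : ℝ) : EReal)) ↔
      ∑ y, max (c y + 1) 0 ≤ 1 := by
  have hscore : ∀ (q : Y → ℝ) (y : Y),
      (c y : EReal) + ((1 - q y : ℝ) : EReal) ≤ 0 ↔ c y + 1 ≤ q y := by
    intro q y
    rw [← EReal.coe_add, EReal.coe_nonpos]
    constructor <;> intro h <;> linarith
  simp only [LsetOf, Set.mem_ofPred_eq, hscore]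
  constructor
  · rintro ⟨q, ⟨hq0, hq1⟩, hq⟩
    exact (sum_le_sum fun y _ => max_le (hq y) (hq0 y)).trans hq1.le
  · intro h
    obtain ⟨q, hq, hle⟩ := exists_mem_probSimplex_le (fun y => le_max_right (c y + 1) 0) h
    exact ⟨q, hq, fun y => (le_max_left _ _).trans (hle y)⟩

/-- closed form of `φ` for the 0-1 loss as a minimum over
nonempty subsets of labels. -/
theorem statement18 {X Y : Type*} [Fintype Y] [Nonempty Y]
    {m : ℕ} (Φ : X × Y → Fin m → ℝ) :
    (∀ v : Y → ℝ,
      sSup {ν : ℝ | ∑ y, max (v y + ν + 1) 0 ≤ 1} =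
        ⨅ C : {C : Finset Y // C.Nonempty},
          (1 - ∑ y ∈ C.1, (v y + 1)) / (C.1.card : ℝ)) ∧
    (∀ (x : X) (μ : Fin m → ℝ),
      phiFn (fun (q : Y → ℝ) (y : Y) => ((1 - q y : ℝ) : EReal)) Φ μ x =
        ⨅ C : {C : Finset Y // C.Nonempty},
          (1 - ∑ y ∈ C.1, ((∑ i, Φ (x, y) i * μ i) + 1)) / (C.1.card : ℝ)) := by
  have hsSup : ∀ v : Y → ℝ, sSup {ν : ℝ | ∑ y, max (v y + ν + 1) 0 ≤ 1} =
      ⨅ C : {C : Finset Y // C.Nonempty}, (1 - ∑ y ∈ C.1, (v y + 1)) / (C.1.card : ℝ) := by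
    intro v
    simp_rw [add_right_comm _ _ (1 : ℝ)]
    exact sSup_setOf_sum_max_add_le (fun y => v y + 1) zero_le_one
  refine ⟨hsSup, fun x μ => ?_⟩
  simp only [phiFn, mem_LsetOf_zeroOne_iff]
  exact hsSup _
end
end
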